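/- For α, Φ ∈ ℝ define the bounded operator I_{S¹}(Φ) on H by I_{S¹}(Φ) = −α Σ_{i,j=1}^{4} M_{K_{ij}(Φ)} ∘ (P¹_{S_i} P²_{S_j}), where S₁ = (−∞,−2], S₂ = {−1}, S₃ = {0}, S₄ = [1,∞), M_{K} denotes multiplication by the function K, and K₁₁ = −2 sin(θ₁−Φ−θ₂), K₁₂ = i e^{i(θ₁−Φ−θ₂)}, K₁₃ = i e^{i(θ₁−Φ+θ₂)}, K₁₄ = −2 sin(θ₁−Φ+θ₂), K₂₁ = −i e^{−i(θ₁−Φ−θ₂)} + i e^{i(θ₁−Φ)}, K₂₂ = i e^{i(θ₁−Φ)}, K₂₃ = i e^{i(θ₁−Φ+θ₂)}, K₂₄ = −2 sin(θ₁−Φ+θ₂), K₃₁ = −i e^{−i(θ₁−Φ)} + i e^{i(θ₁−Φ+θ₂)}, K₃₂ = i e^{−i(θ₁−Φ)}, K₃₃ = 0, K₃₄ = −i e^{−i(θ₁−Φ+θ₂)} + i e^{i(θ₁−Φ−θ₂)}, K₄₁ = −2 sin(θ₁−Φ+θ₂), K₄₂ = −i e^{−i(θ₁−Φ+θ₂)},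 K₄₃ = −i e^{−i(θ₁−Φ−θ₂)}, K₄₄ = −2 sin(θ₁−Φ−θ₂). Then (Fraunhofer pattern): for every Ψ ≠ 0 and every ψ ∈ H, ∫_{−1/2}^{1/2} ⟨ψ, I_{S¹}(Ψx) ψ⟩ dx = (sin(Ψ/2)/(Ψ/2)) · ⟨ψ, I_{S¹}(0) ψ⟩; moreover, if ψ lies in the range of P¹_{{0}}P²_{{0}}, then ∫_{−1/2}^{1/2} ⟨ψ, I_{S¹}(Ψx) ψ⟩ dx = 0 for every Ψ ∈ ℝ. -/

import Mathlib

noncomputable section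

/-- Fourier coefficient model of `L²((ℝ/2πℤ)²)`. -/
abbrev Coef := (ℤ × ℤ) → ℂ

/-- Multiplication by `e^{i(aθ₁+bθ₂)}`, i.e. the shift of Fourier coefficients. -/
def Emul (a b : ℤ) (c : Coef) : Coef := fun p => c (p.1 - a, p.2 - b)

/-- The block projection `P¹_S P²_T`. -/
def blk (S T : ℤ → Prop) [DecidablePred S] [DecidablePred T] (c : Coef) : Coef :=
  fun p => if S p.1 ∧ T p.2 then c p else 0

/-- The Josephson current `I_{S¹}(Φ) = −α Σ_{i,j} M_{K_{ij}(Φ)} ∘ (P¹_{S_i} P²_{S_j})`,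
with `S₁ = (−∞,−2]`, `S₂ = {−1}`, `S₃ = {0}`, `S₄ = [1,∞)`, and the multipliers
`K_{ij}` of the statement, written out in terms of shifts of Fourier coefficients
(using `−2 sin x = i e^{ix} − i e^{−ix}`, `e^{±i(θ₁−Φ±θ₂)} = e^{∓iΦ} E_{±1,±1}`). -/
def Icur (α Φ : ℝ) (c : Coef) : Coef :=
  let v : ℂ := Complex.I * Complex.exp (-(Complex.I * (Φ : ℂ)))
  let v' : ℂ := Complex.I * Complex.exp (Complex.I * (Φ : ℂ))
  (-(α : ℂ)) •
    ( -- K₁₁ = −2 sin(θ₁−Φ−θ₂)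
      (v • Emul 1 (-1) (blk (fun n => n ≤ -2) (fun m => m ≤ -2) c)
        - v' • Emul (-1) 1 (blk (fun n => n ≤ -2) (fun m => m ≤ -2) c))
      -- K₁₂ = i e^{i(θ₁−Φ−θ₂)}
      + v • Emul 1 (-1) (blk (fun n => n ≤ -2) (fun m => m = -1) c)
      -- K₁₃ = i e^{i(θ₁−Φ+θ₂)}
      + v • Emul 1 1 (blk (fun n => n ≤ -2) (fun m => m = 0) c)
      -- K₁₄ = −2 sin(θ₁−Φ+θ₂)
      + (v • Emul 1 1 (blk (fun n => n ≤ -2) (fun m => 1 ≤ m) c)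
        - v' • Emul (-1) (-1) (blk (fun n => n ≤ -2) (fun m => 1 ≤ m) c))
      -- K₂₁ = −i e^{−i(θ₁−Φ−θ₂)} + i e^{i(θ₁−Φ)}
      + (v • Emul 1 0 (blk (fun n => n = -1) (fun m => m ≤ -2) c)
        - v' • Emul (-1) 1 (blk (fun n => n = -1) (fun m => m ≤ -2) c))
      -- K₂₂ = i e^{i(θ₁−Φ)}
      + v • Emul 1 0 (blk (fun n => n = -1) (fun m => m = -1) c)
      -- K₂₃ = i e^{i(θ₁−Φ+θ₂)}
      + v • Emul 1 1 (blk (fun n => n = -1) (fun m => m = 0) c)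
      -- K₂₄ = −2 sin(θ₁−Φ+θ₂)
      + (v • Emul 1 1 (blk (fun n => n = -1) (fun m => 1 ≤ m) c)
        - v' • Emul (-1) (-1) (blk (fun n => n = -1) (fun m => 1 ≤ m) c))
      -- K₃₁ = −i e^{−i(θ₁−Φ)} + i e^{i(θ₁−Φ+θ₂)}
      + (v • Emul 1 1 (blk (fun n => n = 0) (fun m => m ≤ -2) c)
        - v' • Emul (-1) 0 (blk (fun n => n = 0) (fun m => m ≤ -2) c))
      -- K₃₂ = i e^{−i(θ₁−Φ)}
      + v' • Emul (-1) 0 (blk (fun n => n = 0) (fun m => m = -1) c)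
      -- K₃₃ = 0 ; K₃₄ = −i e^{−i(θ₁−Φ+θ₂)} + i e^{i(θ₁−Φ−θ₂)}
      + (v • Emul 1 (-1) (blk (fun n => n = 0) (fun m => 1 ≤ m) c)
        - v' • Emul (-1) (-1) (blk (fun n => n = 0) (fun m => 1 ≤ m) c))
      -- K₄₁ = −2 sin(θ₁−Φ+θ₂)
      + (v • Emul 1 1 (blk (fun n => 1 ≤ n) (fun m => m ≤ -2) c)
        - v' • Emul (-1) (-1) (blk (fun n => 1 ≤ n) (fun m => m ≤ -2) c))
      -- K₄₂ = −i e^{−i(θ₁−Φ+θ₂)}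
      - v' • Emul (-1) (-1) (blk (fun n => 1 ≤ n) (fun m => m = -1) c)
      -- K₄₃ = −i e^{−i(θ₁−Φ−θ₂)}
      - v' • Emul (-1) 1 (blk (fun n => 1 ≤ n) (fun m => m = 0) c)
      -- K₄₄ = −2 sin(θ₁−Φ−θ₂)
      + (v • Emul 1 (-1) (blk (fun n => 1 ≤ n) (fun m => 1 ≤ m) c)
        - v' • Emul (-1) 1 (blk (fun n => 1 ≤ n) (fun m => 1 ≤ m) c)) )

/-- The Hilbert space `L²` of the two-torus, in its Fourier model `ℓ²(ℤ×ℤ)`. -/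
abbrev HS : Type := lp (fun _ : ℤ × ℤ => ℂ) 2

/-! Each block `Emul a b ∘ blk S T` of `Icur` is a coordinate projection followed by a
reindexing of `ℓ²(ℤ²)`, hence bounded. The phase `Φ` enters only as `e^{-iΦ}` on the blocks
raising the first Fourier index and as `e^{iΦ}` on those lowering it, so
`⟨ψ, I(Φ)ψ⟩ = e^{-iΦ} a + e^{iΦ} b`, and averaging `e^{±iΨx}` over `[-1/2, 1/2]` gives
`sinc (Ψ/2)`. The mode `(0,0)` lies only in the block `P¹_{S₃}P²_{S₃}`, whose multiplier
`K₃₃` is `0`, so `I(Φ)` annihilates it. -/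

open Complex

section lpOperators

variable {ι κ : Type*} {E : Type*} [NormedAddCommGroup E] {p : ENNReal}

theorem Memℓp.comp_equiv {f : ι → E} (hf : Memℓp f p) (e : κ ≃ ι) : Memℓp (f ∘ e) p := by
  obtain rfl | rfl | hp := p.trichotomy
  · exact memℓp_zero (hf.finite_dsupport.preimage e.injective.injOn)
  · refine memℓp_infty ?_
    rw [Function.comp_def, ← Function.comp_def (fun i => ‖f i‖), e.surjective.range_comp]
    exact hf.bddAbove
  · exact memℓp_gen ((e.summable_iff (f := fun i => ‖f i‖ ^ p.toReal)).2 (hf.summable hp))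

theorem Memℓp.indicator {f : ι → E} (hf : Memℓp f p) (s : Set ι) : Memℓp (s.indicator f) p :=
  hf.mono' (norm_indicator_le_norm_self f)

def lp.compEquiv (e : κ ≃ ι) (f : lp (fun _ : ι => E) p) : lp (fun _ : κ => E) p :=
  ⟨f ∘ e, (lp.memℓp f).comp_equiv e⟩

@[simp]
theorem lp.compEquiv_apply (e : κ ≃ ι) (f : lp (fun _ : ι => E) p) (k : κ) :
    lp.compEquiv e f k = f (e k) := rfl

theorem lp.norm_compEquiv (hp : p ≠ 0) (e : κ ≃ ι) (f : lp (fun _ : ι => E) p) :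
    ‖lp.compEquiv e f‖ = ‖f‖ := by
  obtain rfl | rfl | hp := p.trichotomy
  · exact absurd rfl hp
  · simpa only [lp.norm_eq_ciSup, lp.compEquiv_apply] using e.iSup_comp (g := fun i => ‖f i‖)
  · simpa only [lp.norm_eq_tsum_rpow hp, lp.compEquiv_apply] using
      congrArg (· ^ (1 / p.toReal)) (e.tsum_eq (fun i => ‖f i‖ ^ p.toReal))

variable (𝕜 : Type*) [NormedField 𝕜] [NormedSpace 𝕜 E] [Fact (1 ≤ p)]

def lp.compEquivₗᵢ (e : κ ≃ ι) : lp (fun _ : ι => E) p →ₗᵢ[𝕜] lp (fun _ : κ => E) p where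
  toFun := lp.compEquiv e
  map_add' _ _ := rfl
  map_smul' _ _ := rfl
  norm_map' := lp.norm_compEquiv (zero_lt_one.trans_le Fact.out).ne' e

def lp.indicatorCLM (s : Set ι) : lp (fun _ : ι => E) p →L[𝕜] lp (fun _ : ι => E) p :=
  LinearMap.mkContinuous
    { toFun := fun f => ⟨s.indicator f, (lp.memℓp f).indicator s⟩
      map_add' := fun f g => lp.ext (s.indicator_add f g)
      map_smul' := fun c f => lp.ext (s.indicator_const_smul c f) }
    1
    fun f => (one_mul ‖f‖).symm ▸
      lp.norm_mono (zero_lt_one.trans_le Fact.out).ne' (norm_indicator_le_norm_self f)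

end lpOperators

theorem integral_exp_mul_mul_I_eq_sinc_half (t : ℝ) :
    ∫ x in (-(1 / 2) : ℝ)..(1 / 2 : ℝ), exp (↑(t * x) * I) = Real.sinc (t / 2) := by
  rcases eq_or_ne t 0 with rfl | ht
  · norm_num
  rw [intervalIntegral.integral_comp_mul_left (fun y : ℝ => exp (↑y * I)) ht, mul_neg,
    show t * (1 / 2) = t / 2 by ring, integral_exp_mul_I_eq_sinc]
  have ht' : (t : ℂ) ≠ 0 := ofReal_ne_zero.2 ht
  rw [real_smul]
  push_cast
  field_simp

section PhaseAverage

variable {E : Type*} [NormedAddCommGroup E] [InnerProductSpace ℂ E]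

def phaseOp (A B : E →L[ℂ] E) (Φ : ℝ) : E →L[ℂ] E :=
  exp (-(I * Φ)) • A + exp (I * Φ) • B

theorem integral_inner_phaseOp (A B : E →L[ℂ] E) (ψ : E) (Ψ : ℝ) :
    ∫ x in (-(1 / 2) : ℝ)..(1 / 2 : ℝ), inner ℂ ψ (phaseOp A B (Ψ * x) ψ)
      = Real.sinc (Ψ / 2) * inner ℂ ψ (phaseOp A B 0 ψ) := by
  have hinner (Φ : ℝ) : inner ℂ ψ (phaseOp A B Φ ψ)
      = exp (-(I * Φ)) * inner ℂ ψ (A ψ) + exp (I * Φ) * inner ℂ ψ (B ψ) := by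
    simp only [phaseOp, add_apply, smul_apply, inner_add_right, inner_smul_right]
  have hintegrand (x : ℝ) : exp (-(I * ↑(Ψ * x))) * inner ℂ ψ (A ψ)
      + exp (I * ↑(Ψ * x)) * inner ℂ ψ (B ψ)
      = exp (↑(-Ψ * x) * I) * inner ℂ ψ (A ψ) + exp (↑(Ψ * x) * I) * inner ℂ ψ (B ψ) := by
    push_cast; ring_nf
  have hcont (s : ℝ) : Continuous fun x : ℝ => exp (↑(s * x) * I) := by fun_prop
  simp only [hinner, hintegrand, ofReal_zero, mul_zero, neg_zero, exp_zero, one_mul]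
  rw [intervalIntegral.integral_add ((hcont _).intervalIntegrable _ _ |>.mul_const _)
      ((hcont _).intervalIntegrable _ _ |>.mul_const _),
    intervalIntegral.integral_mul_const, intervalIntegral.integral_mul_const,
    integral_exp_mul_mul_I_eq_sinc_half, integral_exp_mul_mul_I_eq_sinc_half, neg_div,
    Real.sinc_neg, mul_add]

end PhaseAverage

def shiftEquiv (a b : ℤ) : ℤ × ℤ ≃ ℤ × ℤ :=
  (Equiv.subRight a).prodCongr (Equiv.subRight b)

def blockShift (a b : ℤ) (S T : ℤ → Prop) : HS →L[ℂ] HS :=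
  (lp.compEquivₗᵢ ℂ (shiftEquiv a b)).toContinuousLinearMap ∘L
    lp.indicatorCLM ℂ {p | S p.1 ∧ T p.2}

theorem blockShift_apply (a b : ℤ) (S T : ℤ → Prop) [DecidablePred S] [DecidablePred T]
    (ψ : HS) (p : ℤ × ℤ) : blockShift a b S T ψ p = Emul a b (blk S T ψ) p := by
  change {q : ℤ × ℤ | S q.1 ∧ T q.2}.indicator ψ (shiftEquiv a b p) = _
  simp only [Set.indicator_apply, Emul, blk, shiftEquiv, Equiv.prodCongr_apply, Prod.map,
    Equiv.subRight_apply, Set.mem_ofPred_eq]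

/-- The blocks of `Icur` carrying `e^{iθ₁}`, hence the phase `e^{-iΦ}`; `lowerPart` collects
those carrying `e^{-iθ₁}` and `e^{iΦ}`, with the sign of `Icur` reversed. -/
def raisePart : HS →L[ℂ] HS :=
  blockShift 1 (-1) (fun n => n ≤ -2) (fun m => m ≤ -2)
  + blockShift 1 (-1) (fun n => n ≤ -2) (fun m => m = -1)
  + blockShift 1 1 (fun n => n ≤ -2) (fun m => m = 0)
  + blockShift 1 1 (fun n => n ≤ -2) (fun m => 1 ≤ m)
  + blockShift 1 0 (fun n => n = -1) (fun m => m ≤ -2)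
  + blockShift 1 0 (fun n => n = -1) (fun m => m = -1)
  + blockShift 1 1 (fun n => n = -1) (fun m => m = 0)
  + blockShift 1 1 (fun n => n = -1) (fun m => 1 ≤ m)
  + blockShift 1 1 (fun n => n = 0) (fun m => m ≤ -2)
  + blockShift 1 (-1) (fun n => n = 0) (fun m => 1 ≤ m)
  + blockShift 1 1 (fun n => 1 ≤ n) (fun m => m ≤ -2)
  + blockShift 1 (-1) (fun n => 1 ≤ n) (fun m => 1 ≤ m)

def lowerPart : HS →L[ℂ] HS :=
  blockShift (-1) 1 (fun n => n ≤ -2) (fun m => m ≤ -2)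
  + blockShift (-1) (-1) (fun n => n ≤ -2) (fun m => 1 ≤ m)
  + blockShift (-1) 1 (fun n => n = -1) (fun m => m ≤ -2)
  + blockShift (-1) (-1) (fun n => n = -1) (fun m => 1 ≤ m)
  + blockShift (-1) 0 (fun n => n = 0) (fun m => m ≤ -2)
  + blockShift (-1) (-1) (fun n => n = 0) (fun m => 1 ≤ m)
  + blockShift (-1) (-1) (fun n => 1 ≤ n) (fun m => m ≤ -2)
  + blockShift (-1) (-1) (fun n => 1 ≤ n) (fun m => m = -1)
  + blockShift (-1) 1 (fun n => 1 ≤ n) (fun m => m = 0)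
  + blockShift (-1) 1 (fun n => 1 ≤ n) (fun m => 1 ≤ m)
  - blockShift (-1) 0 (fun n => n = 0) (fun m => m = -1)

def josephsonCurrent (α : ℝ) : ℝ → HS →L[ℂ] HS :=
  phaseOp ((-(α : ℂ) * I) • raisePart) (((α : ℂ) * I) • lowerPart)

theorem josephsonCurrent_apply (α Φ : ℝ) (ψ : HS) (p : ℤ × ℤ) :
    josephsonCurrent α Φ ψ p = Icur α Φ ψ p := by
  simp only [josephsonCurrent, phaseOp, raisePart, lowerPart, add_apply, sub_apply, smul_apply,
    lp.coeFn_add, lp.coeFn_sub, lp.coeFn_smul, Pi.add_apply, Pi.sub_apply, Pi.smul_apply,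
    smul_eq_mul, blockShift_apply, Icur]
  ring

theorem blk_eq_zero_of_forall_ne_zero {S T : ℤ → Prop} [DecidablePred S] [DecidablePred T]
    {c : Coef} (hc : ∀ p : ℤ × ℤ, p ≠ (0, 0) → c p = 0) (hST : ¬(S 0 ∧ T 0)) :
    blk S T c = 0 := by
  funext p
  by_cases hp : p = (0, 0)
  · subst hp
    exact if_neg hST
  · simp only [blk, hc p hp, ite_self, Pi.zero_apply]

theorem Emul_zero (a b : ℤ) : Emul a b 0 = 0 := rfl

theorem Icur_eq_zero_of_forall_ne_zero (α Φ : ℝ) {c : Coef}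
    (hc : ∀ p : ℤ × ℤ, p ≠ (0, 0) → c p = 0) : Icur α Φ c = 0 := by
  simp (disch := decide) only [Icur, blk_eq_zero_of_forall_ne_zero hc, Emul_zero, smul_zero,
    sub_zero, add_zero]

theorem josephsonCurrent_apply_eq_zero (α Φ : ℝ) {ψ : HS}
    (hψ : ∀ p : ℤ × ℤ, p ≠ (0, 0) → ψ p = 0) : josephsonCurrent α Φ ψ = 0 :=
  lp.ext <| funext fun p => by
    rw [josephsonCurrent_apply, Icur_eq_zero_of_forall_ne_zero α Φ hψ]
    rfl

/-- the Fraunhofer pattern.  The coordinate formula `Icur α Φ`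
defines a bounded operator `I_{S¹}(Φ)` on `H`, and for every `Ψ ≠ 0` and every
`ψ ∈ H` the total Josephson current is
`∫_{−1/2}^{1/2} ⟨ψ, I_{S¹}(Ψx)ψ⟩ dx = (sin(Ψ/2)/(Ψ/2)) ⟨ψ, I_{S¹}(0)ψ⟩`;
moreover it vanishes identically on the range of `P¹_{{0}}P²_{{0}}`. -/
theorem stmt16 (α : ℝ) :
    ∃ T : ℝ → (HS →L[ℂ] HS),
      (∀ (Φ : ℝ) (ψ : HS) (p : ℤ × ℤ), T Φ ψ p = Icur α Φ (⇑ψ) p) ∧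
      (∀ Ψ : ℝ, Ψ ≠ 0 → ∀ ψ : HS,
        (∫ x in (-(1 / 2) : ℝ)..(1 / 2 : ℝ), (inner (𝕜 := ℂ) ψ (T (Ψ * x) ψ)))
          = ((Real.sin (Ψ / 2) / (Ψ / 2) : ℝ) : ℂ) * inner (𝕜 := ℂ) ψ (T 0 ψ)) ∧
      (∀ (Ψ : ℝ) (ψ : HS), (∀ p : ℤ × ℤ, p ≠ (0, 0) → ψ p = 0) →
        (∫ x in (-(1 / 2) : ℝ)..(1 / 2 : ℝ), (inner (𝕜 := ℂ) ψ (T (Ψ * x) ψ))) = 0) := by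
  refine ⟨josephsonCurrent α, josephsonCurrent_apply α, fun Ψ hΨ ψ => ?_, fun Ψ ψ hψ => ?_⟩
  · rw [josephsonCurrent, integral_inner_phaseOp,
      Real.sinc_of_ne_zero (div_ne_zero hΨ two_ne_zero)]
  · simp only [josephsonCurrent_apply_eq_zero α _ hψ, inner_zero_right,
      intervalIntegral.integral_zero]
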